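/- arXiv:2004.05073 — 2 statements merged into one kernel-verified Lean document; each statement's English description precedes it below -/
import Mathlib

section
/- Let H be a connected r-graph on n vertices. If H contains a Berge cycle of length at least ℓ(H)+1 (i.e. ℓ(H)+1 ≤ c(H)), then n = c(H). -/
/-!
Let `C` be a longest Berge cycle, of length `t = c(H)`, and suppose some vertex lies off `C`.
By connectivity some edge `g` contains a vertex `x` off `C` and a vertex of `C`. Entering `C`
through `g` and walking once around `C` through the `t - 1` cycle edges other than `g` gives a
Berge path of length `t`, so `ℓ(H) ≥ c(H)`.
-/

namespace Berge

variable {V : Type*} [DecidableEq V] [Fintype V]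

/-- `E` is the edge set of an `r`-uniform hypergraph (`r`-graph) on `V`. -/
def IsRGraph (r : ℕ) (E : Finset (Finset V)) : Prop :=
  ∀ e ∈ E, e.card = r

/-- The degree of a vertex: the number of edges containing it. -/
def deg (E : Finset (Finset V)) (x : V) : ℕ :=
  (E.filter fun e => x ∈ e).card

/-- The minimum degree `δ₁`. -/
noncomputable def minDeg (E : Finset (Finset V)) : ℕ :=
  sInf {d | ∃ x : V, deg E x = d}

/-- A Berge path of length `t`: distinct vertices `v 0, ..., v t` and distinct edges
`f 0, ..., f (t-1)` (here `f i` plays the role of the edge `e_{i+1}` of the paper),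
with `{v i, v (i+1)} ⊆ f i`. -/
def IsBergePath (E : Finset (Finset V)) (t : ℕ)
    (v : Fin (t + 1) → V) (f : Fin t → Finset V) : Prop :=
  Function.Injective v ∧ Function.Injective f ∧ (∀ i, f i ∈ E) ∧
    ∀ i : Fin t, v i.castSucc ∈ f i ∧ v i.succ ∈ f i

/-- `H` is connected: any two vertices are connected by a Berge path. -/
def Connected (E : Finset (Finset V)) : Prop :=
  ∀ u w : V, ∃ (t : ℕ) (v : Fin (t + 1) → V) (f : Fin t → Finset V),
    IsBergePath E t v f ∧ v 0 = u ∧ v (Fin.last t) = w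

/-- `ℓ(H)`: the length of a longest Berge path. -/
noncomputable def pathLen (E : Finset (Finset V)) : ℕ :=
  sSup {t | ∃ (v : Fin (t + 1) → V) (f : Fin t → Finset V), IsBergePath E t v f}

/-- A Berge cycle of length `t`: distinct vertices `v 0, ..., v (t-1)` and distinct
edges `f 0, ..., f (t-1)` with `{v (i-1), v i} ⊆ f i` (indices mod `t`), equivalently
`v i ∈ f i` and `v i ∈ f (i+1)` for all `i`. -/
def IsBergeCycle (E : Finset (Finset V)) (t : ℕ)
    (v : Fin t → V) (f : Fin t → Finset V) : Prop :=
  Function.Injective v ∧ Function.Injective f ∧ (∀ i, f i ∈ E) ∧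
    ∀ i : Fin t, v i ∈ f i ∧ v i ∈ f ⟨((i : ℕ) + 1) % t, Nat.mod_lt _ i.pos⟩

/-- `c(H)`: the length of a longest Berge cycle. -/
noncomputable def cycLen (E : Finset (Finset V)) : ℕ :=
  sSup {t | ∃ (v : Fin t → V) (f : Fin t → Finset V), IsBergeCycle E t v f}

/-- `E^O(P, w)`: the edges of `H` outside `P` that contain `w`. -/
def EO (E : Finset (Finset V)) {t : ℕ} (f : Fin t → Finset V) (w : V) :
    Set (Finset V) :=
  {e | e ∈ E ∧ e ∉ Set.range f ∧ w ∈ e}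

/-- `K(P, w)`: the key vertices of `P` other than `w` that lie on some edge of
`E^O(P, w)`.  For `w = v a` with `a ∈ {0, t}` this is `K_a(P)`; for `w ∉ K(P)` this
is `K_w(P)`. -/
def KsetP (E : Finset (Finset V)) {t : ℕ} (v : Fin (t + 1) → V)
    (f : Fin t → Finset V) (w : V) : Set V :=
  {x | (∃ i, v i = x) ∧ x ≠ w ∧ ∃ e ∈ EO E f w, x ∈ e}

/-- `κ(P, w)`: the set of indices of the vertices in `K(P, w)` (as integers). -/
def kappa (E : Finset (Finset V)) {t : ℕ} (v : Fin (t + 1) → V)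
    (f : Fin t → Finset V) (w : V) : Set ℤ :=
  {i : ℤ | ∃ j : Fin (t + 1), ((j : ℕ) : ℤ) = i ∧ v j ∈ KsetP E v f w}

/-- `E^I(P, w)`: the edges of `P` that contain `w`. -/
def EIset {t : ℕ} (f : Fin t → Finset V) (w : V) : Set (Finset V) :=
  {e | e ∈ Set.range f ∧ w ∈ e}

/-- `ε^i(P, w)`: the (1-based, as in the paper) indices of the edges of `P`
containing `w`, as integers; so `i ∈ ε^i(P, w)` iff `w ∈ e_i = f (i-1)`. -/
def epsi {t : ℕ} (f : Fin t → Finset V) (w : V) : Set ℤ :=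
  {i : ℤ | ∃ j : Fin t, ((j : ℕ) : ℤ) + 1 = i ∧ w ∈ f j}

/-- `N_H(x) = {T : T ∪ {x} ∈ E(H)}` (with `x ∉ T`). -/
def NH (E : Finset (Finset V)) (x : V) : Set (Finset V) :=
  {T | x ∉ T ∧ insert x T ∈ E}

/-- The edge set of `S_r(n, k)` on the vertex set `V` (`|V| = n`), where `A ⊆ V` is
the distinguished `k`-set: all `r`-sets `e` with `|e ∩ (V \ A)| ≤ 1`. -/
def Sr (r : ℕ) (A : Finset V) : Finset (Finset V) :=
  Finset.univ.filter fun e : Finset V => e.card = r ∧ (e \ A).card ≤ 1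

/-- The edge set of `S'_r(n, k)`: all `r`-sets `e` with `|e ∩ (V \ A)| = 1`. -/
def Sr' (r : ℕ) (A : Finset V) : Finset (Finset V) :=
  Finset.univ.filter fun e : Finset V => e.card = r ∧ (e \ A).card = 1

/-- The edge set of `S(sK^r_{k+1}, 1)` determined by the cliques `B 0, ..., B (s-1)`:
all `r`-subsets of some `B i`. -/
def SK (r : ℕ) {s : ℕ} (B : Fin s → Finset V) : Finset (Finset V) :=
  Finset.univ.filter fun e : Finset V => e.card = r ∧ ∃ i, e ⊆ B i

/-- `H` is isomorphic to `S(sK^r_{k+1}, 1)`: there are `s` cliques of size `k+1`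
pairwise meeting exactly in a common center `c` and covering `V`, and the edges of
`H` are exactly the `r`-subsets of the cliques. -/
def IsStarOfCliques (r k s : ℕ) (E : Finset (Finset V)) : Prop :=
  ∃ (c : V) (B : Fin s → Finset V),
    (∀ i, (B i).card = k + 1) ∧ (∀ i, c ∈ B i) ∧
    (∀ i j, i ≠ j → B i ∩ B j = {c}) ∧
    Finset.univ.biUnion B = Finset.univ ∧
    E = SK r B

end Berge

theorem Fin.exists_not_castSucc_and_succ {p : ℕ} {P : Fin (p + 1) → Prop} (h0 : ¬P 0)
    (hlast : P (Fin.last p)) : ∃ i : Fin p, ¬P i.castSucc ∧ P i.succ := by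
  induction p with
  | zero => exact (h0 hlast).elim
  | succ p ih =>
    by_cases hp : P (Fin.last p).castSucc
    · obtain ⟨i, hi⟩ := ih (P := fun i => P i.castSucc) h0 hp
      exact ⟨i.castSucc, hi⟩
    · exact ⟨Fin.last p, hp, hlast⟩

namespace Berge

variable {V : Type*} {E : Finset (Finset V)}

theorem Connected.exists_edge_across (hconn : Connected E) {S : Set V} {u w : V} (hu : u ∉ S)
    (hw : w ∈ S) : ∃ e ∈ E, ∃ x ∉ S, ∃ y ∈ S, x ∈ e ∧ y ∈ e := by
  obtain ⟨t, v, f, ⟨-, -, hfE, hadj⟩, rfl, rfl⟩ := hconn u w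
  obtain ⟨i, hi, hi'⟩ := Fin.exists_not_castSucc_and_succ (P := fun j => v j ∈ S) hu hw
  exact ⟨f i, hfE i, _, hi, _, hi', hadj i⟩

section Cycle

variable {s : ℕ} {v : Fin (s + 1) → V} {f : Fin (s + 1) → Finset V}

theorem IsBergeCycle.mem_succ (hc : IsBergeCycle E (s + 1) v f) (i : Fin (s + 1)) :
    v i ∈ f (i + 1) := by
  have hi : (⟨((i : ℕ) + 1) % (s + 1), Nat.mod_lt _ i.pos⟩ : Fin (s + 1)) = i + 1 := by
    ext
    simp [Fin.val_add]
  simpa only [hi] using (hc.2.2.2 i).2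

theorem IsBergeCycle.isBergePath_cons (hc : IsBergeCycle E (s + 1) v f) {x : V}
    (hx : x ∉ Set.range v) {g : Finset V} (hg : g ∈ E) (hxg : x ∈ g) {j : Fin (s + 1)}
    (hjg : v j ∈ g) (hgf : ∀ i, f i = g → i = j) :
    IsBergePath E (s + 1) (Fin.cons x fun k => v (j + k))
      (Fin.cons g fun k : Fin s => f (j + k.succ)) := by
  refine ⟨?_, ?_, ?_, ?_⟩
  · refine Fin.cons_injective_iff.2 ⟨?_, hc.1.comp (add_right_injective j)⟩
    rintro ⟨k, hk⟩
    exact hx ⟨_, hk⟩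
  · refine Fin.cons_injective_iff.2
      ⟨?_, hc.2.1.comp ((add_right_injective j).comp (Fin.succ_injective _))⟩
    rintro ⟨k, hk⟩
    simpa using hgf _ hk
  · intro i
    cases i using Fin.cases with
    | zero => simpa using hg
    | succ k => simpa using hc.2.2.1 _
  · intro i
    cases i using Fin.cases with
    | zero => simpa using ⟨hxg, hjg⟩
    | succ k =>
      simp only [Fin.cons_succ, ← Fin.succ_castSucc]
      refine ⟨?_, (hc.2.2.2 _).1⟩
      rw [← Fin.coeSucc_eq_succ, ← add_assoc]
      exact hc.mem_succ _

end Cycle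

theorem IsBergeCycle.exists_isBergePath {t : ℕ} {v : Fin t → V} {f : Fin t → Finset V}
    (hc : IsBergeCycle E t v f) (ht : 0 < t) (hconn : Connected E) {u : V}
    (hu : u ∉ Set.range v) :
    ∃ (w : Fin (t + 1) → V) (f' : Fin t → Finset V), IsBergePath E t w f' := by
  obtain ⟨s, rfl⟩ := Nat.exists_eq_add_one_of_ne_zero ht.ne'
  obtain ⟨g, hg, x, hx, _, ⟨i, rfl⟩, hxg, hig⟩ :=
    hconn.exists_edge_across hu (Set.mem_range_self 0)
  by_cases hgf : g ∈ Set.range f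
  · obtain ⟨j, rfl⟩ := hgf
    -- enter the cycle at `v j ∈ f j` instead of `v i`, so that the walk around it skips `f j`
    exact ⟨_, _, hc.isBergePath_cons hx hg hxg (hc.2.2.2 j).1 fun _ h => hc.2.1 h⟩
  · exact ⟨_, _, hc.isBergePath_cons hx hg hxg hig fun i h => (hgf ⟨i, h⟩).elim⟩

variable [Fintype V]

theorem IsBergePath.le_pathLen {t : ℕ} {v : Fin (t + 1) → V} {f : Fin t → Finset V}
    (hp : IsBergePath E t v f) : t ≤ pathLen E := by
  refine le_csSup ⟨Fintype.card V, ?_⟩ ⟨v, f, hp⟩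
  rintro t ⟨v, -, hv, -⟩
  have := Fintype.card_le_of_injective v hv
  simp only [Fintype.card_fin] at this
  omega

theorem IsBergeCycle.le_card {t : ℕ} {v : Fin t → V} {f : Fin t → Finset V}
    (hc : IsBergeCycle E t v f) : t ≤ Fintype.card V := by
  simpa using Fintype.card_le_of_injective v hc.1

theorem exists_isBergeCycle_cycLen (E : Finset (Finset V)) :
    ∃ v f, IsBergeCycle E (cycLen E) v f := by
  refine Nat.sSup_mem
    (s := {t | ∃ (v : Fin t → V) (f : Fin t → Finset V), IsBergeCycle E t v f})
    ⟨0, finZeroElim, finZeroElim, ?_⟩ ⟨Fintype.card V, ?_⟩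
  · exact ⟨Function.injective_of_subsingleton _, Function.injective_of_subsingleton _,
      finZeroElim, finZeroElim⟩
  · rintro t ⟨v, f, hc⟩
    exact hc.le_card

theorem card_eq_cycLen_of_pathLen_lt_general {V : Type*} [Fintype V]
    (n : ℕ) (hcard : Fintype.card V = n)
    (E : Finset (Finset V)) (hconn : Connected E)
    (h : pathLen E + 1 ≤ cycLen E) :
    n = cycLen E := by
  obtain ⟨v, f, hc⟩ := exists_isBergeCycle_cycLen E
  subst hcard
  refine le_antisymm ?_ hc.le_card
  by_contra! hlt
  obtain ⟨u, hu⟩ : ∃ u, u ∉ Set.range v := by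
    by_contra! hsurj
    have := Fintype.card_le_of_surjective v hsurj
    simp only [Fintype.card_fin] at this
    omega
  obtain ⟨w, f', hp⟩ := hc.exists_isBergePath (by omega) hconn hu
  have := hp.le_pathLen
  omega

/-- **Lemma (Statement 4).** Let `H` be a connected `r`-graph on `n` vertices.
If `ℓ(H) + 1 ≤ c(H)` then `n = c(H)`. -/
theorem card_eq_cycLen_of_pathLen_lt {V : Type*} [DecidableEq V] [Fintype V]
    (r n : ℕ) (hcard : Fintype.card V = n)
    (E : Finset (Finset V)) (hE : IsRGraph r E) (hconn : Connected E)
    (h : pathLen E + 1 ≤ cycLen E) :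
    n = cycLen E :=
  card_eq_cycLen_of_pathLen_lt_general n hcard E hconn h

end Berge
end

section
/- Suppose k ≥ r ≥ 2, t ≤ 2k, and H is a connected r-graph on n vertices with ℓ(H) = t and n > t+1. Let P be a longest Berge path in H with edges e_1,...,e_t and key vertices v_0,v_1,...,v_t, and let v ∉ K(P). Then (κ_0(P) − 1) ∩ κ_t(P) = ∅, (κ_0(P) − 1) ∩ κ_v(P) = ∅, and (κ_t(P) + 1) ∩ κ_v(P) = ∅. -/
/-!
Pósa rotation. If an edge `e` off the longest path `P` joins `v₀` to `v_{j}`, then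
`v_{j-1}, …, v₀, v_j, …, v_t` (using `e` in place of `e_j`) is again a longest path, now starting
at `v_{j-1}`. An edge off `P` joining `v_{j-1}` to an outside vertex `x` would then extend it, and
an edge joining `v_{j-1}` to `v_t` would close it into a Berge cycle through all of `K(P)`; since
`H` is connected and has a vertex outside `K(P)`, some edge leaves that cycle, and opening the
cycle next to it gives a path of length `t + 1`. The third claim is the second one for the
reversed path.
-/

namespace Berge

variable {V : Type*} {E : Finset (Finset V)} {t : ℕ} {v : Fin (t + 1) → V} {f : Fin t → Finset V}

def revUpTo {n : ℕ} (k : ℕ) (i : Fin n) : Fin n :=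
  if h : (i : ℕ) ≤ k ∧ k < n then ⟨k - i, by omega⟩ else i

theorem val_revUpTo_of_lt {n k : ℕ} (hk : k < n) (i : Fin n) :
    (revUpTo k i : ℕ) = if (i : ℕ) ≤ k then k - i else i := by
  unfold revUpTo; split_ifs <;> first | rfl | omega

theorem involutive_revUpTo (n k : ℕ) : Function.Involutive (revUpTo k : Fin n → Fin n) := by
  intro i
  unfold revUpTo
  split_ifs <;> ext <;> simp only at * <;> omega

theorem fin_mk_succ_mod_eq_add_one {n : ℕ} (i : Fin (n + 1)) :
    (⟨((i : ℕ) + 1) % (n + 1), Nat.mod_lt _ i.pos⟩ : Fin (n + 1)) = i + 1 := by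
  simp only [Fin.ext_iff, Fin.val_add, Fin.coe_ofNat_eq_mod, Nat.add_mod_mod]

theorem Connected.exists_crossing_edge (hconn : Connected E) {S : Set V} {u w : V} (hu : u ∉ S)
    (hw : w ∈ S) : ∃ q ∈ E, ∃ z ∉ S, ∃ y ∈ S, z ∈ q ∧ y ∈ q := by
  obtain ⟨m, p, g, hp, rfl, rfl⟩ := hconn u w
  by_contra! hno
  have hout : ∀ i, p i ∉ S :=
    Fin.induction hu fun i hi hs => hno _ (hp.2.2.1 i) _ hi _ hs (hp.2.2.2 i).1 (hp.2.2.2 i).2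
  exact hout _ hw

namespace IsBergePath

theorem le_pathLen_s10 [Fintype V] (hP : IsBergePath E t v f) : t ≤ pathLen E := by
  refine le_csSup ⟨Fintype.card V, fun s ⟨w, _, hw⟩ => ?_⟩ ⟨v, f, hP⟩
  have := Fintype.card_le_of_injective w hw.1
  rw [Fintype.card_fin] at this
  omega

theorem mem_edge (hP : IsBergePath E t v f) {c : Fin (t + 1)} {d : Fin t}
    (h : (c : ℕ) = d ∨ (c : ℕ) = d + 1) : v c ∈ f d := by
  rcases h with h | h
  · obtain rfl : c = d.castSucc := Fin.ext h
    exact (hP.2.2.2 d).1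
  · obtain rfl : c = d.succ := Fin.ext h
    exact (hP.2.2.2 d).2

theorem cons (hP : IsBergePath E t v f) {u : V} {h : Finset V} (hh : h ∈ EO E f (v 0))
    (hu : u ∉ Set.range v) (huh : u ∈ h) :
    IsBergePath E (t + 1) (Fin.cons u v) (Fin.cons h f) := by
  refine ⟨Fin.cons_injective_iff.2 ⟨hu, hP.1⟩, Fin.cons_injective_iff.2 ⟨hh.2.1, hP.2.1⟩,
    Fin.cases hh.1 hP.2.2.1, Fin.cases ⟨huh, hh.2.2⟩ fun i => ?_⟩
  simpa [← Fin.succ_castSucc] using hP.2.2.2 i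

theorem reverse (hP : IsBergePath E t v f) : IsBergePath E t (v ∘ Fin.rev) (f ∘ Fin.rev) :=
  ⟨hP.1.comp Fin.rev_injective, hP.2.1.comp Fin.rev_injective, fun _ => hP.2.2.1 _,
    fun i => by simpa [Fin.rev_castSucc, Fin.rev_succ, and_comm] using hP.2.2.2 i.rev⟩

theorem rotate (hP : IsBergePath E t v f) {e : Finset V} (he : e ∈ EO E f (v 0)) (m : Fin t)
    (hme : v m.succ ∈ e) :
    ∃ w f', IsBergePath E t w f' ∧ w 0 = v m.castSucc ∧ w (Fin.last t) = v (Fin.last t) ∧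
      Set.range w = Set.range v ∧ Set.range f' ⊆ insert e (Set.range f) := by
  have hvert := val_revUpTo_of_lt (show (m : ℕ) < t + 1 by omega)
  have hedge := val_revUpTo_of_lt (show (m : ℕ) - 1 < t by omega)
  refine ⟨v ∘ revUpTo m, fun k => if k = m then e else f (revUpTo (m - 1) k),
    ⟨hP.1.comp (involutive_revUpTo _ _).injective, ?_, ?_, ?_⟩, ?_, ?_,
    (involutive_revUpTo _ _).surjective.range_comp v, ?_⟩
  · intro a b hab
    dsimp only at hab
    split_ifs at hab with ha hb hb
    · exact ha.trans hb.symm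
    · exact absurd ⟨_, hab.symm⟩ he.2.1
    · exact absurd ⟨_, hab⟩ he.2.1
    · exact (involutive_revUpTo _ _).injective (hP.2.1 hab)
  · intro k
    dsimp only
    split_ifs
    exacts [he.1, hP.2.2.1 _]
  · intro k
    dsimp only
    split_ifs with hk
    · subst k
      have h0 : revUpTo m m.castSucc = 0 := Fin.ext (by simp [hvert])
      have h1 : revUpTo m m.succ = m.succ := Fin.ext (by simp [hvert])
      exact ⟨by simpa [h0] using he.2.2, by simpa [h1] using hme⟩
    · have hk' : (k : ℕ) ≠ m := fun h => hk (Fin.ext h)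
      constructor <;> apply hP.mem_edge <;> simp only [hvert, hedge, Fin.val_castSucc, Fin.val_succ] <;>
        split_ifs <;> omega
  · exact congrArg v (Fin.ext (by simp [hvert]))
  · exact congrArg v (Fin.ext (by simp [hvert]))
  · rintro _ ⟨k, rfl⟩
    dsimp only
    split_ifs
    exacts [Set.mem_insert _ _, Set.mem_insert_of_mem _ ⟨_, rfl⟩]

theorem isBergeCycle_cons (hP : IsBergePath E t v f) {g : Finset V} (hg : g ∈ EO E f (v 0))
    (hlg : v (Fin.last t) ∈ g) : IsBergeCycle E (t + 1) v (Fin.cons g f) := by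
  refine ⟨hP.1, Fin.cons_injective_iff.2 ⟨hg.2.1, hP.2.1⟩, Fin.cases hg.1 hP.2.2.1,
    fun i => ⟨Fin.cases hg.2.2 (fun j => (hP.2.2.2 j).2) i, ?_⟩⟩
  rw [fin_mk_succ_mod_eq_add_one]
  induction i using Fin.lastCases with
  | last => simpa using hlg
  | cast j => simpa [Fin.coeSucc_eq_succ] using (hP.2.2.2 j).1

end IsBergePath

namespace IsBergeCycle

variable {F : Fin (t + 1) → Finset V}

theorem isBergePath_rotate (hC : IsBergeCycle E (t + 1) v F) (a : Fin (t + 1)) :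
    IsBergePath E t (fun i => v (a + i)) (fun i => F (a + i.succ)) := by
  refine ⟨hC.1.comp (add_right_injective a),
    (hC.2.1.comp (add_right_injective a)).comp (Fin.succ_injective _), fun _ => hC.2.2.1 _,
    fun i => ⟨?_, (hC.2.2.2 _).1⟩⟩
  simpa [fin_mk_succ_mod_eq_add_one, add_assoc, Fin.coeSucc_eq_succ] using
    (hC.2.2.2 (a + i.castSucc)).2

theorem exists_isBergePath_s10 (hC : IsBergeCycle E (t + 1) v F) (hconn : Connected E) {u : V}
    (hu : u ∉ Set.range v) : ∃ w f', IsBergePath E (t + 1) w f' := by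
  obtain ⟨q, hqE, z, hz, _, ⟨b, rfl⟩, hzq, hbq⟩ :=
    hconn.exists_crossing_edge hu (Set.mem_range_self 0)
  -- open the cycle just after the edge `q` if it is a cycle edge, at `v b` otherwise
  obtain ⟨a, hqa, haq⟩ : ∃ a, q ∉ Set.range (fun i : Fin t => F (a + i.succ)) ∧ v a ∈ q := by
    by_cases hq : q ∈ Set.range F
    · obtain ⟨c, rfl⟩ := hq
      refine ⟨c, fun ⟨i, hi⟩ => Fin.succ_ne_zero i ?_, (hC.2.2.2 c).1⟩
      simpa using hC.2.1 hi
    · exact ⟨b, fun ⟨i, hi⟩ => hq ⟨_, hi⟩, hbq⟩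
  refine ⟨_, _, (hC.isBergePath_rotate a).cons ⟨hqE, hqa, by simpa using haq⟩ ?_ hzq⟩
  rintro ⟨i, hi⟩
  exact hz ⟨_, hi⟩

end IsBergeCycle

namespace IsBergePath

theorem exists_longer_of_closing_edge [Fintype V] (hconn : Connected E)
    (hcard : t + 1 < Fintype.card V) (hP : IsBergePath E t v f) {g : Finset V}
    (hg : g ∈ EO E f (v 0)) (hlg : v (Fin.last t) ∈ g) : ∃ w f', IsBergePath E (t + 1) w f' := by
  obtain ⟨u, hu⟩ : ∃ u, u ∉ Set.range v := by
    by_contra! hsurj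
    have := Fintype.card_le_of_surjective v hsurj
    rw [Fintype.card_fin] at this
    omega
  exact (hP.isBergeCycle_cons hg hlg).exists_isBergePath_s10 hconn hu

theorem exists_longer_of_start_chord_of_end_chord [Fintype V] (hconn : Connected E)
    (hcard : t + 1 < Fintype.card V) (hP : IsBergePath E t v f) {e g : Finset V} {m : Fin t}
    (he : e ∈ EO E f (v 0)) (hme : v m.succ ∈ e) (hg : g ∈ EO E f (v (Fin.last t)))
    (hmg : v m.castSucc ∈ g) : ∃ w f', IsBergePath E (t + 1) w f' := by
  by_cases heg : e = g
  · subst heg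
    exact hP.exists_longer_of_closing_edge hconn hcard he hg.2.2
  · obtain ⟨w, f', hw, hw0, hwl, -, hf'⟩ := hP.rotate he m hme
    refine hw.exists_longer_of_closing_edge hconn hcard ⟨hg.1, fun hgf' => ?_, hw0 ▸ hmg⟩
      (hwl ▸ hg.2.2)
    rcases hf' hgf' with h | h
    exacts [heg h.symm, hg.2.1 h]

theorem exists_longer_of_start_chord_of_outer_edge (hP : IsBergePath E t v f) {x : V}
    (hx : x ∉ Set.range v) {e g : Finset V} {m : Fin t} (he : e ∈ EO E f (v 0))
    (hme : v m.succ ∈ e) (hg : g ∈ EO E f x) (hmg : v m.castSucc ∈ g) :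
    ∃ w f', IsBergePath E (t + 1) w f' := by
  by_cases heg : e = g
  · subst heg
    exact ⟨_, _, hP.cons he hx hg.2.2⟩
  · obtain ⟨w, f', hw, hw0, -, hwv, hf'⟩ := hP.rotate he m hme
    refine ⟨_, _, hw.cons ⟨hg.1, fun hgf' => ?_, hw0 ▸ hmg⟩ (hwv ▸ hx) hg.2.2⟩
    rcases hf' hgf' with h | h
    exacts [heg h.symm, hg.2.1 h]

theorem exists_longer_of_end_chord_of_outer_edge (hP : IsBergePath E t v f) {x : V}
    (hx : x ∉ Set.range v) {g h : Finset V} {m : Fin t} (hg : g ∈ EO E f (v (Fin.last t)))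
    (hmg : v m.castSucc ∈ g) (hh : h ∈ EO E f x) (hmh : v m.succ ∈ h) :
    ∃ w f', IsBergePath E (t + 1) w f' := by
  have hEO : ∀ y, EO E (f ∘ Fin.rev) y = EO E f y := fun y => by
    simp only [EO, Fin.rev_surjective.range_comp f]
  refine hP.reverse.exists_longer_of_start_chord_of_outer_edge (e := g) (m := m.rev)
    (by rwa [Fin.rev_surjective.range_comp v]) ?_ ?_ (by rwa [hEO]) ?_
  · simpa [hEO] using hg
  · simpa [Fin.rev_succ] using hmg
  · simpa [Fin.rev_castSucc] using hmh

end IsBergePath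

theorem exists_consecutive_of_mem_kappa {w w' : V} {i : ℤ} (h : i + 1 ∈ kappa E v f w)
    (h' : i ∈ kappa E v f w') :
    ∃ m : Fin t, (∃ e ∈ EO E f w, v m.succ ∈ e) ∧ ∃ g ∈ EO E f w', v m.castSucc ∈ g := by
  obtain ⟨j, hj, -, -, he⟩ := h
  obtain ⟨j', hj', -, -, hg⟩ := h'
  have hjj' : (j : ℕ) = j' + 1 := by omega
  refine ⟨⟨j', by omega⟩, ?_, ?_⟩
  · rwa [show (⟨j', _⟩ : Fin t).succ = j from Fin.ext hjj'.symm]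
  · rwa [show (⟨j', _⟩ : Fin t).castSucc = j' from rfl]

theorem kappa_shift_disjoint_general {V : Type*} [Fintype V] (t n : ℕ)
    (hcard : Fintype.card V = n) (hn : n > t + 1)
    (E : Finset (Finset V)) (hconn : Connected E) (hlen : pathLen E = t)
    (v : Fin (t + 1) → V) (f : Fin t → Finset V) (hP : IsBergePath E t v f)
    (x : V) (hx : ∀ i, v i ≠ x) :
    {i : ℤ | i + 1 ∈ kappa E v f (v 0)} ∩ kappa E v f (v (Fin.last t)) = ∅ ∧
    {i : ℤ | i + 1 ∈ kappa E v f (v 0)} ∩ kappa E v f x = ∅ ∧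
    {i : ℤ | i - 1 ∈ kappa E v f (v (Fin.last t))} ∩ kappa E v f x = ∅ := by
  have hx' : x ∉ Set.range v := fun ⟨i, hi⟩ => hx i hi
  have no_longer : ¬ ∃ w f', IsBergePath E (t + 1) w f' := fun ⟨_, _, hw⟩ => by
    have := hw.le_pathLen_s10
    omega
  refine ⟨?_, ?_, ?_⟩ <;> refine Set.eq_empty_iff_forall_notMem.2 fun i ⟨hi, hi'⟩ => no_longer ?_
  · obtain ⟨m, ⟨e, he, hme⟩, g, hg, hmg⟩ := exists_consecutive_of_mem_kappa hi hi'
    exact hP.exists_longer_of_start_chord_of_end_chord hconn (by omega) he hme hg hmg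
  · obtain ⟨m, ⟨e, he, hme⟩, g, hg, hmg⟩ := exists_consecutive_of_mem_kappa hi hi'
    exact hP.exists_longer_of_start_chord_of_outer_edge hx' he hme hg hmg
  · obtain ⟨m, ⟨h, hh, hmh⟩, g, hg, hmg⟩ :=
      exists_consecutive_of_mem_kappa (i := i - 1) (by rwa [sub_add_cancel]) hi
    exact hP.exists_longer_of_end_chord_of_outer_edge hx' hg hmg hh hmh

/-- **Proposition (1.2) (Statement 10).** Suppose `k ≥ r ≥ 2`, `t ≤ 2k`, `H` is a
connected `r`-graph on `n > t+1` vertices with `ℓ(H) = t`, `P` is a longest Berge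
path with edges `f 0, ..., f (t-1)` and key vertices `v 0, ..., v t`, and
`x ∉ K(P)`. Then `(κ_0(P) - 1) ∩ κ_t(P) = ∅`, `(κ_0(P) - 1) ∩ κ_x(P) = ∅` and
`(κ_t(P) + 1) ∩ κ_x(P) = ∅`. -/
theorem kappa_shift_disjoint {V : Type*} [DecidableEq V] [Fintype V]
    (k r t n : ℕ) (hr2 : 2 ≤ r) (hkr : k ≥ r) (ht : t ≤ 2 * k)
    (hcard : Fintype.card V = n) (hn : n > t + 1)
    (E : Finset (Finset V)) (hE : IsRGraph r E) (hconn : Connected E)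
    (hlen : pathLen E = t)
    (v : Fin (t + 1) → V) (f : Fin t → Finset V) (hP : IsBergePath E t v f)
    (x : V) (hx : ∀ i, v i ≠ x) :
    {i : ℤ | i + 1 ∈ kappa E v f (v 0)} ∩ kappa E v f (v (Fin.last t)) = ∅ ∧
    {i : ℤ | i + 1 ∈ kappa E v f (v 0)} ∩ kappa E v f x = ∅ ∧
    {i : ℤ | i - 1 ∈ kappa E v f (v (Fin.last t))} ∩ kappa E v f x = ∅ :=
  kappa_shift_disjoint_general t n hcard hn E hconn hlen v f hP x hx

end Berge
end
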